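/- In every iteration n of the forgetful single-history channel algorithm in which values differ (x_n ≠ x'_n), the input-to-previous-output difference satisfies T_n = t_n − t'_n > −δ∞ (where T_n = +∞ if t'_n = −∞); consequently every appended output event has its delay δ(T_n) within [δinf, δ∞], i.e., all events of the input are delayed by times in [δinf, δ∞]. -/

import Mathlib

open scoped Classical

/-- The value of the last event of an output list (stored in reverse order, the most
recent event first); the implicit initial event is `(−∞, x)`. -/
def lastVal (x : Bool) : List (ℝ × Bool) → Bool
  | [] => x
  | e :: _ => e.2

/-- One iteration of the forgetful single-history channel algorithm. -/
noncomputable def fstep (δ : ℝ → ℝ) (dinfty : ℝ) (x : Bool)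
    (S : List (ℝ × Bool)) (e : ℝ × Bool) : List (ℝ × Bool) :=
  if e.2 = lastVal x S then S
  else
    match S with
    | [] => [(e.1 + dinfty, e.2)]
    | (t', b) :: rest =>
        if t' < e.1 + δ (e.1 - t') then (e.1 + δ (e.1 - t'), e.2) :: (t', b) :: rest
        else rest

/-- The output list `S_n` after `n` iterations of the forgetful algorithm. -/
noncomputable def fstates (δ : ℝ → ℝ) (dinfty : ℝ) (x : Bool) (ev : ℕ → ℝ × Bool) :
    ℕ → List (ℝ × Bool)
  | 0 => []
  | n + 1 => fstep δ dinfty x (fstates δ dinfty x ev n) (ev n)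

/-- The delay applied in iteration `n`: `δ∞` if the previous output event is the initial
event `(−∞, x)`, and `δ(t_n − t'_n)` otherwise. -/
noncomputable def appliedDelay (δ : ℝ → ℝ) (dinfty : ℝ) (x : Bool) (ev : ℕ → ℝ × Bool)
    (n : ℕ) : ℝ :=
  match fstates δ dinfty x ev n with
  | [] => dinfty
  | (t', _) :: _ => δ ((ev n).1 - t')

/-- in every value-changing iteration `n` of the forgetful single-history
channel algorithm, the input-to-previous-output difference satisfies
`T_n = t_n − t'_n > −δ∞` (when `t'_n` is finite), and the applied delay lies in
`[δinf, δ∞]`, where `δinf` is the right limit of `δ` at `−δ∞` (possibly `−∞`, taken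
in `EReal`). -/
theorem forgetful_delay_bounds (δ : ℝ → ℝ) (dinfty : ℝ) (x : Bool)
    (hmono : Monotone δ)
    (hlim : Filter.Tendsto δ Filter.atTop (nhds dinfty))
    (hpos : 0 < dinfty)
    (dinf : EReal)
    (hdinf : Filter.Tendsto (fun u : ℝ => ((δ (-dinfty + u) : ℝ) : EReal))
      (nhdsWithin 0 (Set.Ioi 0)) (nhds dinf))
    (ev : ℕ → ℝ × Bool)
    (hnn : 0 ≤ (ev 0).1)
    (hinc : StrictMono fun n => (ev n).1)
    (htop : Filter.Tendsto (fun n => (ev n).1) Filter.atTop Filter.atTop)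
    (halt : ∀ n, (ev (n + 1)).2 ≠ (ev n).2) :
    ∀ n : ℕ, (ev n).2 ≠ lastVal x (fstates δ dinfty x ev n) →
      (∀ (t' : ℝ) (b : Bool) (rest : List (ℝ × Bool)),
          fstates δ dinfty x ev n = (t', b) :: rest → -dinfty < (ev n).1 - t') ∧
      dinf ≤ ((appliedDelay δ dinfty x ev n : ℝ) : EReal) ∧
      ((appliedDelay δ dinfty x ev n : ℝ) : EReal) ≤ ((dinfty : ℝ) : EReal) := by
  have hδle : ∀ t, δ t ≤ dinfty := by
    intro t
    refine ge_of_tendsto hlim ?_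
    filter_upwards [Filter.eventually_ge_atTop t] with s hs using hmono hs
  have hdinf_le : ∀ u : ℝ, 0 < u → dinf ≤ ((δ (-dinfty + u) : ℝ) : EReal) := by
    intro u hu
    refine le_of_tendsto hdinf ?_
    filter_upwards [Ioo_mem_nhdsGT_of_mem (Set.left_mem_Ico.2 hu)] with v hv
    exact EReal.coe_le_coe_iff.2 (hmono (by linarith [hv.2]))
  have hinv : ∀ n, ∀ p ∈ fstates δ dinfty x ev n, ∃ m, m < n ∧ p.1 ≤ (ev m).1 + dinfty := by
    intro n
    induction n with
    | zero => intro p hp; simp [fstates] at hp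
    | succ n ih =>
      intro p hp
      rw [fstates] at hp
      unfold fstep at hp
      by_cases hc : (ev n).2 = lastVal x (fstates δ dinfty x ev n)
      · rw [if_pos hc] at hp
        obtain ⟨m, hm, hle⟩ := ih p hp
        exact ⟨m, Nat.lt_succ_of_lt hm, hle⟩
      · rw [if_neg hc] at hp
        cases hS : fstates δ dinfty x ev n with
        | nil =>
          rw [hS] at hp
          simp only [List.mem_singleton] at hp
          exact ⟨n, Nat.lt_succ_self n, by rw [hp]⟩
        | cons e rest =>
          obtain ⟨t', b⟩ := e
          rw [hS] at hp
          simp only at hp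
          by_cases hlt : t' < (ev n).1 + δ ((ev n).1 - t')
          · rw [if_pos hlt] at hp
            rcases List.mem_cons.1 hp with h | h
            · refine ⟨n, Nat.lt_succ_self n, ?_⟩
              rw [h]
              simpa using add_le_add_left (hδle ((ev n).1 - t')) (ev n).1
            · obtain ⟨m, hm, hle⟩ := ih p (hS ▸ h)
              exact ⟨m, Nat.lt_succ_of_lt hm, hle⟩
          · rw [if_neg hlt] at hp
            obtain ⟨m, hm, hle⟩ := ih p (hS ▸ List.mem_cons_of_mem _ hp)
            exact ⟨m, Nat.lt_succ_of_lt hm, hle⟩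
  intro n _
  have hhead : ∀ (t' : ℝ) (b : Bool) (rest : List (ℝ × Bool)),
      fstates δ dinfty x ev n = (t', b) :: rest → -dinfty < (ev n).1 - t' := by
    intro t' b rest hS
    obtain ⟨m, hm, hle⟩ := hinv n (t', b) (by rw [hS]; exact List.mem_cons_self)
    have h2 := hinc hm
    simp only at hle h2
    linarith
  refine ⟨hhead, ?_⟩
  cases hS : fstates δ dinfty x ev n with
  | nil =>
    have hA : appliedDelay δ dinfty x ev n = dinfty := by
      unfold appliedDelay; rw [hS]
    rw [hA]
    refine ⟨le_of_tendsto hdinf (Filter.Eventually.of_forall fun v =>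
      EReal.coe_le_coe_iff.2 (hδle _)), le_refl _⟩
  | cons e rest =>
    obtain ⟨t', b⟩ := e
    have ht := hhead t' b rest hS
    have hA : appliedDelay δ dinfty x ev n = δ ((ev n).1 - t') := by
      unfold appliedDelay; rw [hS]
    rw [hA]
    constructor
    · have heq : (ev n).1 - t' = -dinfty + ((ev n).1 - t' + dinfty) := by ring
      rw [heq]
      exact hdinf_le _ (by linarith)
    · exact EReal.coe_le_coe_iff.2 (hδle _)
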